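/- arXiv:1707.01399 — 4 statements merged into one kernel-verified Lean document; each statement's English description precedes it below -/
import Mathlib

section
/- Suppose G_P is connected, P has Q-bounded measure ratios (ν(R) ≤ Q·ν(R') for all regions R, R'), every vertex of G_P has degree at most D with D ≥ 2, and f̂ : P → E is a coarse embedding of G_P into a Banach space E with control functions ρ₋, ρ₊. Set r = (1/log D)·log(|P|/(2Q)) − 1, where |P| is the number of regions. If r ≥ 0, then the induced function f : X → E satisfies ‖f‖_B ≥ (1/4)·ρ₋(r). -/
/-!
Let `A₀` be a region where `‖f̂‖` is smallest. With bounded degree, the ball of radius `⌊r⌋`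
around `A₀` in `G_P` contains at most `D ^ (⌊r⌋ + 1) ≤ |P| / (2Q)` regions, and each region has
measure at most `Q / |P|`, so the regions outside the ball carry at least half of the mass. For
such a region `B`, the coarse embedding gives `ρ₋(r) ≤ ‖f̂ A₀ - f̂ B‖ ≤ 2 ‖f̂ B‖`, hence
`‖f‖_B² ≥ ½ (ρ₋(r) / 2)² ≥ (ρ₋(r) / 4)²`.
-/

open MeasureTheory

/-- The approximating graph `G_P` of a partition `P` with respect to an action of `Γ` on `(X, ν)`:
vertices are the regions of `P`, and two distinct regions `A, B` are adjacent iff there is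
`s ∈ S` with `ν ((s • A) ∩ B) > 0`.  (Under the standing hypotheses — `S` symmetric and the
action measure preserving — the relation below is symmetric, so `fromRel` yields exactly this
graph.) -/
def approxGraph {Γ X : Type*} [Group Γ] [MulAction Γ X] [MeasurableSpace X]
    (ν : Measure X) (S : Finset Γ) (P : Finset (Set X)) :
    SimpleGraph {A : Set X // A ∈ P} :=
  SimpleGraph.fromRel fun A B => ∃ s ∈ S, 0 < ν ((fun y => s • y) '' A.1 ∩ B.1)

open Finset

namespace SimpleGraph

variable {V : Type*} {G : SimpleGraph V}

lemma Connected.exists_adj_dist_eq_of_dist_eq_succ (hG : G.Connected) {v w : V} {k : ℕ}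
    (h : G.dist v w = k + 1) : ∃ u, G.Adj u w ∧ G.dist v u = k := by
  obtain ⟨p, hp⟩ := hG.exists_walk_length_eq_dist w v
  rw [dist_comm, ← hp] at h
  cases p with
  | nil => simp at h
  | @cons _ u _ hadj q =>
    refine ⟨u, hadj.symm, ?_⟩
    have hle : G.dist u v ≤ k := (dist_le q).trans (by simp at h; omega)
    have hge : G.dist w v ≤ 1 + G.dist u v := by
      rw [← dist_eq_one_iff_adj.mpr hadj]; exact hG.dist_triangle
    rw [dist_comm]; omega

variable [Fintype V] {D : ℕ}

lemma Connected.card_sphere_le (hG : G.Connected) (hdeg : ∀ v, (G.neighborSet v).ncard ≤ D)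
    (v : V) (k : ℕ) : #{w | G.dist v w = k} ≤ D ^ k := by
  classical
  induction k with
  | zero =>
    calc #{w | G.dist v w = 0} ≤ #{v} :=
          card_le_card fun w hw => by simp [hG.dist_eq_zero_iff.mp (mem_filter.mp hw).2]
      _ = D ^ 0 := by simp
  | succ k ih =>
    have hsub : ({w | G.dist v w = k + 1} : Finset V) ⊆
        ({w | G.dist v w = k} : Finset V).biUnion fun u => (G.neighborSet u).toFinset := by
      intro w hw
      obtain ⟨u, hadj, hu⟩ := hG.exists_adj_dist_eq_of_dist_eq_succ (mem_filter.mp hw).2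
      exact mem_biUnion.mpr ⟨u, by simpa using hu, by simpa using hadj⟩
    calc #{w | G.dist v w = k + 1}
        ≤ ∑ u ∈ {w | G.dist v w = k}, #(G.neighborSet u).toFinset :=
          (card_le_card hsub).trans card_biUnion_le
      _ ≤ ∑ _u ∈ {w | G.dist v w = k}, D :=
          sum_le_sum fun u _ => (Set.ncard_eq_toFinset_card' _).symm.trans_le (hdeg u)
      _ ≤ D ^ k * D := by rw [sum_const, smul_eq_mul]; exact Nat.mul_le_mul_right D ih
      _ = D ^ (k + 1) := (pow_succ D k).symm

lemma Connected.card_ball_le (hG : G.Connected) (hD : 2 ≤ D)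
    (hdeg : ∀ v, (G.neighborSet v).ncard ≤ D) (v : V) (n : ℕ) :
    #{w | G.dist v w ≤ n} ≤ D ^ (n + 1) := by
  classical
  induction n with
  | zero =>
    simpa using (hG.card_sphere_le hdeg v 0).trans (by rw [pow_zero]; omega : D ^ 0 ≤ D)
  | succ n ih =>
    have hsub : ({w | G.dist v w ≤ n + 1} : Finset V) ⊆
        ({w | G.dist v w ≤ n} : Finset V) ∪ ({w | G.dist v w = n + 1} : Finset V) := by
      intro w hw
      simp only [mem_union, mem_filter, mem_univ, true_and] at hw ⊢
      omega
    calc #{w | G.dist v w ≤ n + 1}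
        ≤ D ^ (n + 1) + D ^ (n + 1) :=
          (card_le_card hsub).trans <| (card_union_le _ _).trans <|
            Nat.add_le_add ih (hG.card_sphere_le hdeg v (n + 1))
      _ ≤ D * D ^ (n + 1) := by rw [← two_mul]; exact Nat.mul_le_mul_right _ hD
      _ = D ^ (n + 1 + 1) := (pow_succ' D _).symm

end SimpleGraph

section Partition

variable {X E : Type*} {P : Finset (Set X)} {R : X → Set X}

lemma eq_region_of_mem (hPdisj : ∀ A ∈ P, ∀ B ∈ P, A ≠ B → Disjoint A B)
    (hR : ∀ x, R x ∈ P ∧ x ∈ R x) {A : Set X} (hA : A ∈ P) {x : X} (hx : x ∈ A) : A = R x :=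
  by_contra fun hne => Set.disjoint_left.mp (hPdisj A hA (R x) (hR x).1 hne) hx (hR x).2

lemma comp_region_eq_sum_indicator [AddCommMonoid E]
    (hPdisj : ∀ A ∈ P, ∀ B ∈ P, A ≠ B → Disjoint A B) (hR : ∀ x, R x ∈ P ∧ x ∈ R x)
    (φ : {A // A ∈ P} → E) (x : X) :
    φ ⟨R x, (hR x).1⟩ = ∑ A : {A // A ∈ P}, A.1.indicator (fun _ => φ A) x := by
  rw [sum_eq_single_of_mem ⟨R x, (hR x).1⟩ (mem_univ _), Set.indicator_of_mem (hR x).2]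
  intro A _ hA
  exact Set.indicator_of_notMem (fun hx => hA (Subtype.ext (eq_region_of_mem hPdisj hR A.2 hx))) _

variable [MeasurableSpace X] {ν : Measure X}

lemma integral_comp_region [NormedAddCommGroup E] [NormedSpace ℝ E] [CompleteSpace E]
    [IsFiniteMeasure ν] (hPmeas : ∀ A ∈ P, MeasurableSet A)
    (hPdisj : ∀ A ∈ P, ∀ B ∈ P, A ≠ B → Disjoint A B) (hR : ∀ x, R x ∈ P ∧ x ∈ R x)
    (φ : {A // A ∈ P} → E) :
    ∫ x, φ ⟨R x, (hR x).1⟩ ∂ν = ∑ A, ν.real A.1 • φ A := by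
  simp_rw [comp_region_eq_sum_indicator hPdisj hR φ]
  rw [integral_finsetSum _ fun A _ => (integrable_const _).indicator (hPmeas A.1 A.2)]
  exact sum_congr rfl fun A _ => integral_indicator_const _ (hPmeas A.1 A.2)

lemma sum_measureReal_region [IsProbabilityMeasure ν] (hPmeas : ∀ A ∈ P, MeasurableSet A)
    (hPdisj : ∀ A ∈ P, ∀ B ∈ P, A ≠ B → Disjoint A B) (hR : ∀ x, R x ∈ P ∧ x ∈ R x) :
    ∑ A : {A // A ∈ P}, ν.real A.1 = 1 := by
  simpa using (integral_comp_region (ν := ν) hPmeas hPdisj hR fun _ => (1 : ℝ)).symm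

end Partition

section Weights

variable {ι : Type*} [Fintype ι] {w : ι → ℝ} {Q : ℝ}

lemma card_mul_le_of_forall_le_mul (hw : ∑ i, w i = 1) (hQ : ∀ i j, w i ≤ Q * w j) (i : ι) :
    Fintype.card ι * w i ≤ Q :=
  calc Fintype.card ι * w i = ∑ _j, w i := by simp
    _ ≤ ∑ j, Q * w j := sum_le_sum fun j _ => hQ i j
    _ = Q := by rw [← mul_sum, hw, mul_one]

lemma one_le_of_forall_le_mul (hw : ∑ i, w i = 1) (hQ : ∀ i j, w i ≤ Q * w j) : 1 ≤ Q := by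
  obtain ⟨i, -, hi⟩ := exists_lt_of_sum_lt (s := univ) (f := 0) (g := w) (by simp [hw])
  exact (le_mul_iff_one_le_left hi).mp (hQ i i)

variable [DecidableEq ι]

lemma half_le_sum_compl_of_card_le (hw : ∑ i, w i = 1) (hQ : ∀ i j, w i ≤ Q * w j) {T : Finset ι}
    (hT : (#T : ℝ) ≤ Fintype.card ι / (2 * Q)) : 1 / 2 ≤ ∑ i ∈ Tᶜ, w i := by
  have hQ1 := one_le_of_forall_le_mul hw hQ
  have hcard : (0 : ℝ) < Fintype.card ι := by
    rw [Nat.cast_pos, Fintype.card_pos_iff]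
    by_contra h
    simp [not_nonempty_iff.mp h] at hw
  have hT' : ∑ i ∈ T, w i ≤ 1 / 2 :=
    calc ∑ i ∈ T, w i ≤ ∑ _i ∈ T, Q / Fintype.card ι :=
          sum_le_sum fun i _ =>
            (le_div_iff₀' hcard).mpr (card_mul_le_of_forall_le_mul hw hQ i)
      _ ≤ Fintype.card ι / (2 * Q) * (Q / Fintype.card ι) := by
          rw [sum_const, nsmul_eq_mul]; gcongr
      _ = 1 / 2 := by field_simp
  linarith [sum_compl_add_sum T w]

lemma half_le_sqrt_sum_mul_sq {a : ι → ℝ} {T : Finset ι} {c : ℝ} (hw : ∀ i, 0 ≤ w i)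
    (hc : 0 ≤ c) (hT : 1 / 2 ≤ ∑ i ∈ Tᶜ, w i) (ha : ∀ i ∉ T, c ≤ a i) :
    c / 2 ≤ √(∑ i, w i * a i ^ 2) := by
  refine Real.le_sqrt_of_sq_le ?_
  calc (c / 2) ^ 2 ≤ 1 / 2 * c ^ 2 := by nlinarith
    _ ≤ ∑ i ∈ Tᶜ, w i * c ^ 2 := by rw [← sum_mul]; gcongr
    _ ≤ ∑ i ∈ Tᶜ, w i * a i ^ 2 := sum_le_sum fun i hi =>
        mul_le_mul_of_nonneg_left (pow_le_pow_left₀ hc (ha i (mem_compl.mp hi)) 2) (hw i)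
    _ ≤ ∑ i, w i * a i ^ 2 := sum_le_sum_of_subset_of_nonneg (subset_univ _)
        fun i _ _ => by have := hw i; positivity

end Weights

lemma pow_floor_logb_sub_one_add_one_le {b z : ℝ} (hb : 1 < b) (hz : 0 < z)
    (h : 0 ≤ Real.logb b z - 1) : b ^ (⌊Real.logb b z - 1⌋₊ + 1) ≤ z :=
  calc b ^ (⌊Real.logb b z - 1⌋₊ + 1) = b ^ ((⌊Real.logb b z - 1⌋₊ + 1 : ℕ) : ℝ) :=
        (Real.rpow_natCast _ _).symm
    _ ≤ b ^ Real.logb b z := Real.rpow_le_rpow_of_exponent_le hb.le <| by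
        push_cast; linarith [Nat.floor_le h]
    _ = z := Real.rpow_logb (by linarith) hb.ne' hz

theorem statement2_general
    {Γ X E : Type*} [Group Γ] [MulAction Γ X] [MeasurableSpace X]
    [NormedAddCommGroup E]
    (ν : Measure X) [IsProbabilityMeasure ν]
    (S : Finset Γ)
    (P : Finset (Set X))
    (hPmeas : ∀ A ∈ P, MeasurableSet A)
    (hPdisj : ∀ A ∈ P, ∀ B ∈ P, A ≠ B → Disjoint A B)
    (R : X → Set X)
    (hR : ∀ x : X, R x ∈ P ∧ x ∈ R x)
    (hconn : (approxGraph ν S P).Connected)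
    (Q : ℝ)
    (hQ : ∀ A ∈ P, ∀ B ∈ P, (ν A).toReal ≤ Q * (ν B).toReal)
    (D : ℕ) (hD : 2 ≤ D)
    (hdeg : ∀ v : {A : Set X // A ∈ P}, {w | (approxGraph ν S P).Adj v w}.ncard ≤ D)
    (ρminus ρplus : ℝ → ℝ)
    (hmonoMinus : MonotoneOn ρminus (Set.Ici 0))
    (hnnMinus : ∀ x ≥ (0:ℝ), 0 ≤ ρminus x)
    (fhat : {A : Set X // A ∈ P} → E)
    (hemb : ∀ A B : {A : Set X // A ∈ P},
      ρminus ((approxGraph ν S P).dist A B : ℝ) ≤ ‖fhat A - fhat B‖ ∧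
      ‖fhat A - fhat B‖ ≤ ρplus ((approxGraph ν S P).dist A B : ℝ))
    (hr : 0 ≤ (1 / Real.log D) * Real.log ((P.card : ℝ) / (2 * Q)) - 1) :
    (1 / 4 : ℝ) * ρminus ((1 / Real.log D) * Real.log ((P.card : ℝ) / (2 * Q)) - 1)
      ≤ Real.sqrt (∫ x, ‖fhat ⟨R x, (hR x).1⟩‖ ^ 2 ∂ν) := by
  classical
  set G := approxGraph ν S P
  have hw := sum_measureReal_region (ν := ν) hPmeas hPdisj hR
  have hwQ : ∀ A B : {A // A ∈ P}, ν.real A.1 ≤ Q * ν.real B.1 := fun A B => hQ A.1 A.2 B.1 B.2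
  have hz : 0 < (#P : ℝ) / (2 * Q) := by
    have hQ1 := one_le_of_forall_le_mul hw hwQ
    have hP : 0 < #P := card_pos.mpr ⟨_, hconn.nonempty.some.2⟩
    positivity
  have hlogb : 1 / Real.log D * Real.log (#P / (2 * Q)) = Real.logb D (#P / (2 * Q)) := by
    rw [one_div_mul_eq_div, Real.log_div_log]
  rw [hlogb] at hr ⊢
  set r := Real.logb D (#P / (2 * Q)) - 1
  obtain ⟨A₀, -, hA₀⟩ :=
    exists_min_image univ (fun A => ‖fhat A‖) (univ_nonempty_iff.mpr hconn.nonempty)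
  set ball : Finset {A // A ∈ P} := {B | G.dist A₀ B ≤ ⌊r⌋₊}
  have hball : (#ball : ℝ) ≤ Fintype.card {A // A ∈ P} / (2 * Q) := by
    rw [Fintype.card_coe]
    calc (#ball : ℝ) ≤ (D : ℝ) ^ (⌊r⌋₊ + 1) := by exact_mod_cast hconn.card_ball_le hD hdeg A₀ _
      _ ≤ _ := pow_floor_logb_sub_one_add_one_le (by exact_mod_cast hD) hz hr
  have hfar : ∀ B ∉ ball, ρminus r / 2 ≤ ‖fhat B‖ := by
    intro B hB
    have hrB : r ≤ G.dist A₀ B := by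
      have : ⌊r⌋₊ < G.dist A₀ B := by simpa [ball] using hB
      exact (Nat.lt_floor_add_one r).le.trans (by exact_mod_cast this)
    linarith [(hmonoMinus hr (hr.trans hrB) hrB).trans (hemb A₀ B).1,
      norm_sub_le (fhat A₀) (fhat B), hA₀ B (mem_univ B)]
  rw [integral_comp_region hPmeas hPdisj hR fun A => ‖fhat A‖ ^ 2]
  calc 1 / 4 * ρminus r = ρminus r / 2 / 2 := by ring
    _ ≤ _ := half_le_sqrt_sum_mul_sq (fun _ => measureReal_nonneg) (by linarith [hnnMinus r hr])
        (half_le_sum_compl_of_card_le hw hwQ hball) hfar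

/-- Suppose the approximating graph `G_P` is connected, `P` has `Q`-bounded measure ratios, every
vertex of `G_P` has degree at most `D ≥ 2`, and `f̂ : P → E` is a coarse embedding of `G_P` into a
Banach space `E` with control functions `ρ₋, ρ₊`.  Set `r = (1/log D)·log(|P|/(2Q)) − 1`.
If `r ≥ 0`, then the induced function `f x = f̂ (R x)` satisfies `‖f‖_B ≥ (1/4)·ρ₋(r)`. -/
theorem statement2
    {Γ X E : Type*} [Group Γ] [MulAction Γ X] [MeasurableSpace X]
    [NormedAddCommGroup E] [NormedSpace ℝ E] [CompleteSpace E]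
    (ν : Measure X) [IsProbabilityMeasure ν]
    (S : Finset Γ)
    (hSsym : ∀ s ∈ S, s⁻¹ ∈ S)
    (hSgen : Subgroup.closure (S : Set Γ) = ⊤)
    (hact : ∀ γ : Γ, MeasurePreserving (fun x : X => γ • x) ν ν)
    (P : Finset (Set X))
    (hPmeas : ∀ A ∈ P, MeasurableSet A)
    (hPpos : ∀ A ∈ P, 0 < ν A)
    (hPdisj : ∀ A ∈ P, ∀ B ∈ P, A ≠ B → Disjoint A B)
    (R : X → Set X)
    (hR : ∀ x : X, R x ∈ P ∧ x ∈ R x)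
    (hconn : (approxGraph ν S P).Connected)
    (Q : ℝ)
    (hQ : ∀ A ∈ P, ∀ B ∈ P, (ν A).toReal ≤ Q * (ν B).toReal)
    (D : ℕ) (hD : 2 ≤ D)
    (hdeg : ∀ v : {A : Set X // A ∈ P}, {w | (approxGraph ν S P).Adj v w}.ncard ≤ D)
    (ρminus ρplus : ℝ → ℝ)
    (hmonoMinus : MonotoneOn ρminus (Set.Ici 0)) (hmonoPlus : MonotoneOn ρplus (Set.Ici 0))
    (hnnMinus : ∀ x ≥ (0:ℝ), 0 ≤ ρminus x) (hnnPlus : ∀ x ≥ (0:ℝ), 0 ≤ ρplus x)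
    (hunbMinus : ∀ c : ℝ, ∃ x ≥ (0:ℝ), c ≤ ρminus x) (hunbPlus : ∀ c : ℝ, ∃ x ≥ (0:ℝ), c ≤ ρplus x)
    (fhat : {A : Set X // A ∈ P} → E)
    (hemb : ∀ A B : {A : Set X // A ∈ P},
      ρminus ((approxGraph ν S P).dist A B : ℝ) ≤ ‖fhat A - fhat B‖ ∧
      ‖fhat A - fhat B‖ ≤ ρplus ((approxGraph ν S P).dist A B : ℝ))
    (hr : 0 ≤ (1 / Real.log D) * Real.log ((P.card : ℝ) / (2 * Q)) - 1) :
    (1 / 4 : ℝ) * ρminus ((1 / Real.log D) * Real.log ((P.card : ℝ) / (2 * Q)) - 1)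
      ≤ Real.sqrt (∫ x, ‖fhat ⟨R x, (hR x).1⟩‖ ^ 2 ∂ν) :=
  statement2_general ν S P hPmeas hPdisj R hR hconn Q hQ D hD hdeg ρminus ρplus hmonoMinus hnnMinus
    fhat hemb hr
end

section
/- For each n ∈ ℕ, let Γ_n be a group with finite symmetric generating set S_n acting on a probability space (X_n,ν_n) by measurable, measure-preserving bijections, and let E be a Banach space. Suppose all actions have E-spectral gap with a common constant ε > 0. Let P_n be finite measurable partitions of X_n into regions of positive measure, each with Q-bounded measure ratios (ν_n(R) ≤ Q·ν_n(R') for all regions R, R' ∈ P_n, with Q independent of n), suppose each approximating graph G_{P_n} is connected with all vertex degrees at most D (D ≥ 2, independent of n), and suppose |P_n| → ∞. Then for every pair of nondecreasing unbounded functions ρ₋, ρ₊ : [0,∞) → [0,∞), it is not the case that for every n there exists a coarse embedding f̂_n : P_n → E of G_{P_n} into E with control functions ρ₋, ρ₊. -/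
/-!
Pull an embedding `f̂` back to the step function `f = f̂ ∘ regionOf`. For a.e. `x` the regions of
`x` and `s⁻¹ • x` are equal or adjacent, so `‖f - s • f‖ ≤ ρ₊ 1` pointwise and the spectral gap
gives `‖f - ∫ f‖₂ ≤ C := ρ₊ 1 / ε`; hence some region `A₀` has `f̂ A₀` within `C` of the mean.
Bounded degree leaves at most `(D + 1) ^ k` regions within distance `k` of `A₀`, and bounded
measure ratios make them carry at most half of the mass once `|P| ≥ 2 Q (D + 1) ^ k`. On the other
half `‖f - ∫ f‖ ≥ ρ₋ k - C`, which contradicts the `L²` bound as soon as `ρ₋ k > 3 C`.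
-/

open MeasureTheory
open scoped NNReal ENNReal

open Finset

namespace SimpleGraph

variable {V : Type*} [Fintype V] (G : SimpleGraph V) {D : ℕ}

open Classical in
theorem card_filter_exists_walk_length_le_le_pow (hdeg : ∀ v, (G.neighborSet v).ncard ≤ D)
    (k : ℕ) (v : V) :
    #{w | ∃ p : G.Walk v w, p.length ≤ k} ≤ (D + 1) ^ k := by
  induction k generalizing v with
  | zero =>
    calc #{w | ∃ p : G.Walk v w, p.length ≤ 0} ≤ #{v} := by
          refine card_le_card fun w hw => ?_
          obtain ⟨p, hp⟩ := (mem_filter.1 hw).2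
          simp [(Walk.eq_of_length_eq_zero (Nat.le_zero.1 hp)).symm]
      _ = (D + 1) ^ 0 := by simp
  | succ k ih =>
    have hsub : ({w | ∃ p : G.Walk v w, p.length ≤ k + 1} : Finset V) ⊆
        {v} ∪ ({u | G.Adj v u} : Finset V).biUnion
          fun u => {w | ∃ p : G.Walk u w, p.length ≤ k} := by
      intro w hw
      obtain ⟨p, hp⟩ := (mem_filter.1 hw).2
      cases p with
      | nil => simp
      | cons h q =>
        simp only [Walk.length_cons] at hp
        simpa using Or.inr ⟨_, h, q, by omega⟩
    have hN : #{u | G.Adj v u} ≤ D := by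
      rw [← Set.ncard_coe_finset]
      simpa [neighborSet] using hdeg v
    calc #{w | ∃ p : G.Walk v w, p.length ≤ k + 1}
        ≤ 1 + ∑ u ∈ {u | G.Adj v u}, #{w | ∃ p : G.Walk u w, p.length ≤ k} :=
          (card_le_card hsub).trans <| (card_union_le _ _).trans <|
            add_le_add (card_singleton v).le card_biUnion_le
      _ ≤ 1 + D * (D + 1) ^ k := by
          grw [sum_le_card_nsmul _ _ _ fun u _ => ih u, smul_eq_mul, hN]
      _ ≤ (D + 1) ^ (k + 1) := by
          rw [pow_succ]
          nlinarith [Nat.one_le_pow k (D + 1) (Nat.succ_pos D)]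

theorem card_filter_dist_le_le_pow (hconn : G.Connected)
    (hdeg : ∀ v, (G.neighborSet v).ncard ≤ D) (k : ℕ) (v : V) :
    #{w | G.dist v w ≤ k} ≤ (D + 1) ^ k := by
  classical
  refine (card_le_card fun w hw => ?_).trans (G.card_filter_exists_walk_length_le_le_pow hdeg k v)
  obtain ⟨p, hp⟩ := (hconn.preconnected v w).exists_walk_length_eq_dist
  simpa using ⟨p, hp ▸ (mem_filter.1 hw).2⟩

end SimpleGraph

section PartitionMeasure

variable {X : Type*} [MeasurableSpace X] {μ : Measure X} [IsProbabilityMeasure μ]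
  {P : Finset (Set X)}

theorem sum_measureReal_eq_one (hmeas : ∀ A ∈ P, MeasurableSet A)
    (hdisj : ∀ A ∈ P, ∀ B ∈ P, A ≠ B → Disjoint A B) (hcover : ∀ x, ∃ A ∈ P, x ∈ A) :
    ∑ A ∈ P, μ.real A = 1 := by
  have hunion : ⋃ A ∈ P, A = Set.univ := Set.eq_univ_of_forall fun x => by
    simpa using hcover x
  rw [← measureReal_biUnion_finset (fun A hA B hB => hdisj A hA B hB) hmeas, hunion,
    probReal_univ]

theorem card_mul_measureReal_le (hmeas : ∀ A ∈ P, MeasurableSet A)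
    (hdisj : ∀ A ∈ P, ∀ B ∈ P, A ≠ B → Disjoint A B) (hcover : ∀ x, ∃ A ∈ P, x ∈ A) {Q : ℝ≥0}
    (hQ : ∀ A ∈ P, ∀ B ∈ P, μ A ≤ Q * μ B) {A : Set X} (hA : A ∈ P) :
    #P * μ.real A ≤ Q := by
  have hQ' : ∀ B ∈ P, μ.real A ≤ Q * μ.real B := fun B hB => by
    simpa [measureReal_def, ENNReal.toReal_mul] using
      ENNReal.toReal_mono (by finiteness) (hQ A hA B hB)
  calc #P * μ.real A = ∑ B ∈ P, μ.real A := by simp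
    _ ≤ ∑ B ∈ P, Q * μ.real B := sum_le_sum hQ'
    _ = Q := by rw [← mul_sum, sum_measureReal_eq_one hmeas hdisj hcover, mul_one]

theorem card_mul_measureReal_biUnion_le (hmeas : ∀ A ∈ P, MeasurableSet A)
    (hdisj : ∀ A ∈ P, ∀ B ∈ P, A ≠ B → Disjoint A B) (hcover : ∀ x, ∃ A ∈ P, x ∈ A) {Q : ℝ≥0}
    (hQ : ∀ A ∈ P, ∀ B ∈ P, μ A ≤ Q * μ B) (T : Finset P) :
    #P * μ.real (⋃ B ∈ T, (B : Set X)) ≤ #T * Q := by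
  calc #P * μ.real (⋃ B ∈ T, (B : Set X)) ≤ ∑ B ∈ T, #P * μ.real B := by
        rw [← mul_sum]
        exact mul_le_mul_of_nonneg_left (measureReal_biUnion_finset_le _ _) (by positivity)
    _ ≤ #T * Q := by
        simpa using sum_le_card_nsmul T _ _ fun B _ =>
          card_mul_measureReal_le hmeas hdisj hcover hQ B.2

end PartitionMeasure

section Partition

variable {X : Type*} {P : Finset (Set X)}

noncomputable def regionOf (hcover : ∀ x, ∃ A ∈ P, x ∈ A) (x : X) : P :=
  ⟨(hcover x).choose, (hcover x).choose_spec.1⟩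

variable (hcover : ∀ x, ∃ A ∈ P, x ∈ A)

theorem mem_regionOf (x : X) : x ∈ (regionOf hcover x : Set X) :=
  (hcover x).choose_spec.2

theorem regionOf_eq_of_mem (hdisj : ∀ A ∈ P, ∀ B ∈ P, A ≠ B → Disjoint A B) {x : X} {B : P}
    (hx : x ∈ (B : Set X)) : regionOf hcover x = B := by
  by_contra hne
  exact Set.disjoint_left.1 (hdisj _ (regionOf hcover x).2 _ B.2 (Subtype.coe_ne_coe.2 hne))
    (mem_regionOf hcover x) hx

theorem stronglyMeasurable_comp_regionOf [MeasurableSpace X] {E : Type*} [TopologicalSpace E]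
    (hmeas : ∀ A ∈ P, MeasurableSet A) (hdisj : ∀ A ∈ P, ∀ B ∈ P, A ≠ B → Disjoint A B)
    (g : P → E) : StronglyMeasurable (g ∘ regionOf hcover) := by
  let _ : MeasurableSpace P := ⊤
  have hpre (B : P) : regionOf hcover ⁻¹' {B} = B := by
    ext x
    exact ⟨fun h => h ▸ mem_regionOf hcover x, regionOf_eq_of_mem hcover hdisj⟩
  exact StronglyMeasurable.of_discrete.comp_measurable
    (measurable_to_countable' fun B => hpre B ▸ hmeas B B.2)

theorem memLp_comp_regionOf [MeasurableSpace X] {E : Type*} [NormedAddCommGroup E]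
    (μ : Measure X) [IsFiniteMeasure μ] (hmeas : ∀ A ∈ P, MeasurableSet A)
    (hdisj : ∀ A ∈ P, ∀ B ∈ P, A ≠ B → Disjoint A B) (g : P → E) (p : ℝ≥0∞) :
    MemLp (g ∘ regionOf hcover) p μ := by
  obtain ⟨K, hK⟩ := (Set.finite_range fun A => ‖g A‖).bddAbove
  exact .of_bound (stronglyMeasurable_comp_regionOf hcover hmeas hdisj g).aestronglyMeasurable K
    (.of_forall fun x => hK ⟨_, rfl⟩)

variable [MeasurableSpace X] {μ : Measure X} [IsProbabilityMeasure μ]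

theorem half_le_measureReal_dist_regionOf_gt (hmeas : ∀ A ∈ P, MeasurableSet A)
    (hdisj : ∀ A ∈ P, ∀ B ∈ P, A ≠ B → Disjoint A B) {Q : ℝ≥0}
    (hQ : ∀ A ∈ P, ∀ B ∈ P, μ A ≤ Q * μ B) {G : SimpleGraph P} {D k : ℕ} (hconn : G.Connected)
    (hdeg : ∀ v, (G.neighborSet v).ncard ≤ D) (hcard : 2 * Q * (D + 1) ^ k ≤ (#P : ℝ))
    (A : P) : 1 / 2 ≤ μ.real {x | k < G.dist A (regionOf hcover x)} := by
  set ball : Finset P := {B | G.dist A B ≤ k}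
  have hnear : #P * μ.real (⋃ B ∈ ball, (B : Set X)) ≤ (D + 1) ^ k * Q := by
    refine (card_mul_measureReal_biUnion_le hmeas hdisj hcover hQ ball).trans ?_
    gcongr
    exact_mod_cast G.card_filter_dist_le_le_pow hconn hdeg k A
  have hsplit : Set.univ ⊆ {x | k < G.dist A (regionOf hcover x)} ∪ ⋃ B ∈ ball, (B : Set X) :=
    fun x _ => by
      by_cases h : G.dist A (regionOf hcover x) ≤ k
      · exact Or.inr (Set.mem_biUnion (by simpa [ball] using h) (mem_regionOf hcover x))
      · exact Or.inl (not_le.1 h)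
  have hone : 1 ≤ μ.real {x | k < G.dist A (regionOf hcover x)} +
      μ.real (⋃ B ∈ ball, (B : Set X)) :=
    calc 1 = μ.real Set.univ := probReal_univ.symm
      _ ≤ _ := measureReal_mono hsplit
      _ ≤ _ := measureReal_union_le _ _
  have hpos : (0 : ℝ) < #P := by exact_mod_cast card_pos.2 ⟨A.1, A.2⟩
  nlinarith

end Partition

theorem sqrt_integral_norm_sq_le_of_ae_norm_le {α E : Type*} [MeasurableSpace α]
    [NormedAddCommGroup E] {μ : Measure α} [IsProbabilityMeasure μ] {g : α → E} {L : ℝ}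
    (hL : 0 ≤ L) (hg : ∀ᵐ x ∂μ, ‖g x‖ ≤ L) :
    Real.sqrt (∫ x, ‖g x‖ ^ 2 ∂μ) ≤ L := by
  rw [Real.sqrt_le_left hL]
  calc ∫ x, ‖g x‖ ^ 2 ∂μ ≤ ∫ _, L ^ 2 ∂μ :=
        integral_mono_of_nonneg (.of_forall fun x => by positivity) (integrable_const _)
          (hg.mono fun x hx => pow_le_pow_left₀ (norm_nonneg _) hx 2)
    _ = L ^ 2 := by simp

section ApproxGraph

variable {Γ X : Type*} [Group Γ] [MulAction Γ X] [MeasurableSpace X] {ν : Measure X}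
  {S : Finset Γ} {P : Finset (Set X)} (hcover : ∀ x, ∃ A ∈ P, x ∈ A)

theorem ae_regionOf_eq_or_approxGraph_adj {s : Γ} (hs : s ∈ S) :
    ∀ᵐ x ∂ν, regionOf hcover x = regionOf hcover (s⁻¹ • x) ∨
      (approxGraph ν S P).Adj (regionOf hcover x) (regionOf hcover (s⁻¹ • x)) := by
  have hnull : ∀ᵐ x ∂ν, ∀ A B : P, ν ((s • ·) '' B ∩ A) = 0 → x ∉ (s • ·) '' B ∩ A := by
    refine ae_all_iff.2 fun A => ae_all_iff.2 fun B => ?_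
    by_cases h : ν ((s • ·) '' B ∩ A) = 0
    · exact (measure_eq_zero_iff_ae_notMem.1 h).mono fun x hx _ => hx
    · exact .of_forall fun x h' => absurd h' h
  filter_upwards [hnull] with x hx
  refine or_iff_not_imp_left.2 fun hne => ⟨hne, Or.inr ⟨s, hs, pos_iff_ne_zero.2 fun h => ?_⟩⟩
  exact hx _ _ h ⟨⟨s⁻¹ • x, mem_regionOf hcover _, smul_inv_smul s x⟩, mem_regionOf hcover x⟩

end ApproxGraph

def HasSpectralGap (E : Type*) [NormedAddCommGroup E] [NormedSpace ℝ E] {Γ X : Type*}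
    [Group Γ] [MulAction Γ X] [MeasurableSpace X] (ν : Measure X) (S : Finset Γ) (ε : ℝ) :
    Prop :=
  ∀ f : X → E, MemLp f 2 ν → ∫ x, f x ∂ν = 0 →
    ∃ s ∈ S, ε * Real.sqrt (∫ x, ‖f x‖ ^ 2 ∂ν) ≤ Real.sqrt (∫ x, ‖f x - f (s⁻¹ • x)‖ ^ 2 ∂ν)

section SpectralGap

variable {E : Type*} [NormedAddCommGroup E] [NormedSpace ℝ E] [CompleteSpace E] {Γ X : Type*}
  [Group Γ] [MulAction Γ X] [MeasurableSpace X] {ν : Measure X} [IsProbabilityMeasure ν]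
  {S : Finset Γ} {P : Finset (Set X)}

theorem integral_norm_sub_integral_sq_le_of_hasSpectralGap (hcover : ∀ x, ∃ A ∈ P, x ∈ A)
    (hmeas : ∀ A ∈ P, MeasurableSet A) (hdisj : ∀ A ∈ P, ∀ B ∈ P, A ≠ B → Disjoint A B)
    {ε : ℝ} (hε : 0 < ε)
    (hgap : HasSpectralGap E ν S ε) {fhat : P → E} {L : ℝ} (hL : 0 ≤ L)
    (hadj : ∀ A B, (approxGraph ν S P).Adj A B → ‖fhat A - fhat B‖ ≤ L) :
    ∫ x, ‖fhat (regionOf hcover x) - ∫ y, fhat (regionOf hcover y) ∂ν‖ ^ 2 ∂ν ≤ (L / ε) ^ 2 := by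
  set m := ∫ y, fhat (regionOf hcover y) ∂ν
  have hint : Integrable (fun x => fhat (regionOf hcover x)) ν :=
    memLp_one_iff_integrable.1 (memLp_comp_regionOf hcover ν hmeas hdisj fhat 1)
  obtain ⟨s, hs, hgap_s⟩ := hgap (fun x => fhat (regionOf hcover x) - m)
    (memLp_comp_regionOf hcover ν hmeas hdisj (fun A => fhat A - m) 2)
    (by rw [integral_sub hint (integrable_const m), integral_const, probReal_univ, one_smul,
      sub_self])
  have hstep : ∀ᵐ x ∂ν,
      ‖(fhat (regionOf hcover x) - m) - (fhat (regionOf hcover (s⁻¹ • x)) - m)‖ ≤ L := by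
    filter_upwards [ae_regionOf_eq_or_approxGraph_adj hcover hs] with x hx
    rw [sub_sub_sub_cancel_right]
    rcases hx with h | h
    · simpa [h] using hL
    · exact hadj _ _ h
  have := hgap_s.trans (sqrt_integral_norm_sq_le_of_ae_norm_le hL hstep)
  rwa [← Real.sqrt_le_left (by positivity), le_div_iff₀ hε, mul_comm]

theorem card_lt_of_hasSpectralGap (hcover : ∀ x, ∃ A ∈ P, x ∈ A)
    (hmeas : ∀ A ∈ P, MeasurableSet A) (hdisj : ∀ A ∈ P, ∀ B ∈ P, A ≠ B → Disjoint A B)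
    {ε : ℝ} (hε : 0 < ε)
    (hgap : HasSpectralGap E ν S ε) {Q : ℝ≥0} (hQ : ∀ A ∈ P, ∀ B ∈ P, ν A ≤ Q * ν B) {D : ℕ}
    (hconn : (approxGraph ν S P).Connected)
    (hdeg : ∀ v, ((approxGraph ν S P).neighborSet v).ncard ≤ D) {fhat : P → E} {L R : ℝ}
    {k : ℕ} (hL : 0 ≤ L) (hLR : 3 * L < ε * R)
    (hadj : ∀ A B, (approxGraph ν S P).Adj A B → ‖fhat A - fhat B‖ ≤ L)
    (hfar : ∀ A B, k < (approxGraph ν S P).dist A B → R ≤ ‖fhat A - fhat B‖) :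
    (#P : ℝ) < 2 * Q * (D + 1) ^ k := by
  by_contra! hcard
  set m := ∫ y, fhat (regionOf hcover y) ∂ν
  set C := L / ε
  have hC : 0 ≤ C := by positivity
  have hCR : 3 * C < R := by rwa [mul_div_assoc', div_lt_iff₀ hε, mul_comm R]
  have hint : Integrable (fun x => ‖fhat (regionOf hcover x) - m‖ ^ 2) ν :=
    memLp_one_iff_integrable.1
      (memLp_comp_regionOf hcover ν hmeas hdisj (fun A => ‖fhat A - m‖ ^ 2) 1)
  have hvar := integral_norm_sub_integral_sq_le_of_hasSpectralGap hcover hmeas hdisj hε hgap hL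
    hadj
  obtain ⟨x₀, hx₀⟩ := exists_le_integral hint
  have hx₀C : ‖fhat (regionOf hcover x₀) - m‖ ≤ C :=
    (pow_le_pow_iff_left₀ (norm_nonneg _) hC two_ne_zero).1 (hx₀.trans hvar)
  have hfar_subset : {x | k < (approxGraph ν S P).dist (regionOf hcover x₀) (regionOf hcover x)} ⊆
      {x | (R - C) ^ 2 ≤ ‖fhat (regionOf hcover x) - m‖ ^ 2} := fun x hx => by
    have := (hfar _ _ hx).trans (norm_sub_le_norm_sub_add_norm_sub _ m _)
    rw [norm_sub_rev m] at this
    have hRC : R - C ≤ ‖fhat (regionOf hcover x) - m‖ := by linarith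
    exact pow_le_pow_left₀ (by linarith) hRC 2
  have hhalf := (half_le_measureReal_dist_regionOf_gt hcover hmeas hdisj hQ hconn hdeg hcard
    (regionOf hcover x₀)).trans (measureReal_mono hfar_subset)
  have hmarkov := mul_meas_ge_le_integral_of_nonneg (.of_forall fun x => by positivity) hint
    ((R - C) ^ 2)
  -- `(R - C)² / 2 ≤ ∫ ‖f - m‖² ≤ C²`, impossible as `R - C > 2 C ≥ 0`
  nlinarith [mul_nonneg (sq_nonneg (R - C)) (sub_nonneg.2 hhalf)]

end SpectralGap

theorem statement4_general
    {E : Type*} [NormedAddCommGroup E] [NormedSpace ℝ E] [CompleteSpace E]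
    (Γ : ℕ → Type*) [∀ n, Group (Γ n)]
    (X : ℕ → Type*) [∀ n, MeasurableSpace (X n)] [∀ n, MulAction (Γ n) (X n)]
    (ν : ∀ n, Measure (X n)) [∀ n, IsProbabilityMeasure (ν n)]
    (S : ∀ n, Finset (Γ n))
    (ε : ℝ) (hε : 0 < ε)
    (hgap : ∀ n, ∀ f : X n → E, MemLp f 2 (ν n) → (∫ x, f x ∂(ν n)) = 0 →
      ∃ s ∈ S n, ε * Real.sqrt (∫ x, ‖f x‖ ^ 2 ∂(ν n))
        ≤ Real.sqrt (∫ x, ‖f x - f (s⁻¹ • x)‖ ^ 2 ∂(ν n)))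
    (P : ∀ n, Finset (Set (X n)))
    (hPmeas : ∀ n, ∀ A ∈ P n, MeasurableSet A)
    (hPdisj : ∀ n, ∀ A ∈ P n, ∀ B ∈ P n, A ≠ B → Disjoint A B)
    (hPcover : ∀ n, ∀ x : X n, ∃ A ∈ P n, x ∈ A)
    (Q : ℝ≥0)
    (hQ : ∀ n, ∀ A ∈ P n, ∀ B ∈ P n, ν n A ≤ (Q : ℝ≥0∞) * ν n B)
    (hconn : ∀ n, (approxGraph (ν n) (S n) (P n)).Connected)
    (D : ℕ)
    (hdeg : ∀ n, ∀ v : {A : Set (X n) // A ∈ P n},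
      {w | (approxGraph (ν n) (S n) (P n)).Adj v w}.ncard ≤ D)
    (hcard : Filter.Tendsto (fun n => (P n).card) Filter.atTop Filter.atTop)
    (ρminus ρplus : ℝ → ℝ)
    (hmonoMinus : MonotoneOn ρminus (Set.Ici 0))
    (hnnPlus : ∀ x ≥ (0:ℝ), 0 ≤ ρplus x)
    (hunbMinus : ∀ c : ℝ, ∃ x ≥ (0:ℝ), c ≤ ρminus x) :
    ¬ ∀ n, ∃ fhat : {A : Set (X n) // A ∈ P n} → E,
        ∀ A B : {A : Set (X n) // A ∈ P n},
          ρminus ((approxGraph (ν n) (S n) (P n)).dist A B : ℝ) ≤ ‖fhat A - fhat B‖ ∧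
          ‖fhat A - fhat B‖ ≤ ρplus ((approxGraph (ν n) (S n) (P n)).dist A B : ℝ) := by
  intro hemb
  set L := ρplus 1
  set R := 3 * L / ε + 1
  obtain ⟨x₀, hx₀, hR⟩ := hunbMinus R
  set k := ⌈x₀⌉₊
  obtain ⟨n, hn⟩ := (hcard.eventually_ge_atTop ⌈2 * Q * (D + 1) ^ k⌉₊).exists
  obtain ⟨fhat, hfhat⟩ := hemb n
  have hLR : 3 * L < ε * R := by
    rw [mul_add, mul_div_cancel₀ _ hε.ne', mul_one]
    linarith
  refine (card_lt_of_hasSpectralGap (hPcover n) (hPmeas n) (hPdisj n) hε (hgap n) (hQ n)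
    (hconn n) (hdeg n) (fhat := fhat) (hnnPlus 1 zero_le_one) hLR (fun A B hAB => ?_)
    (fun A B hAB => ?_)).not_ge (Nat.ceil_le.1 hn)
  · simpa [SimpleGraph.dist_eq_one_iff_adj.2 hAB] using (hfhat A B).2
  · have hx₀k : x₀ ≤ (approxGraph (ν n) (S n) (P n)).dist A B :=
      (Nat.le_ceil x₀).trans (Nat.cast_le.2 hAB.le)
    exact hR.trans ((hmonoMinus hx₀ (hx₀.trans hx₀k) hx₀k).trans (hfhat A B).1)

/-- Let `Γ n ↷ (X n, ν n)` be measure-preserving actions all having `E`-spectral gap with a common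
constant `ε > 0`.  Let `P n` be finite measurable partitions with `Q`-bounded measure ratios whose
approximating graphs are connected, of degree at most `D ≥ 2`, with `|P n| → ∞`.  Then for every
pair of nondecreasing unbounded control functions `ρ₋, ρ₊`, it is not the case that for every `n`
there is a coarse embedding of the approximating graph into `E` with control functions
`ρ₋, ρ₊`. -/
theorem statement4
    {E : Type*} [NormedAddCommGroup E] [NormedSpace ℝ E] [CompleteSpace E]
    (Γ : ℕ → Type*) [∀ n, Group (Γ n)]
    (X : ℕ → Type*) [∀ n, MeasurableSpace (X n)] [∀ n, MulAction (Γ n) (X n)]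
    (ν : ∀ n, Measure (X n)) [∀ n, IsProbabilityMeasure (ν n)]
    (S : ∀ n, Finset (Γ n))
    (hSsym : ∀ n, ∀ s ∈ S n, s⁻¹ ∈ S n)
    (hSgen : ∀ n, Subgroup.closure ((S n : Set (Γ n))) = ⊤)
    (hact : ∀ n, ∀ γ : Γ n, MeasurePreserving (fun x : X n => γ • x) (ν n) (ν n))
    (ε : ℝ) (hε : 0 < ε)
    (hgap : ∀ n, ∀ f : X n → E, MemLp f 2 (ν n) → (∫ x, f x ∂(ν n)) = 0 →
      ∃ s ∈ S n, ε * Real.sqrt (∫ x, ‖f x‖ ^ 2 ∂(ν n))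
        ≤ Real.sqrt (∫ x, ‖f x - f (s⁻¹ • x)‖ ^ 2 ∂(ν n)))
    (P : ∀ n, Finset (Set (X n)))
    (hPmeas : ∀ n, ∀ A ∈ P n, MeasurableSet A)
    (hPpos : ∀ n, ∀ A ∈ P n, 0 < ν n A)
    (hPdisj : ∀ n, ∀ A ∈ P n, ∀ B ∈ P n, A ≠ B → Disjoint A B)
    (hPcover : ∀ n, ∀ x : X n, ∃ A ∈ P n, x ∈ A)
    (Q : ℝ≥0)
    (hQ : ∀ n, ∀ A ∈ P n, ∀ B ∈ P n, ν n A ≤ (Q : ℝ≥0∞) * ν n B)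
    (hconn : ∀ n, (approxGraph (ν n) (S n) (P n)).Connected)
    (D : ℕ) (hD : 2 ≤ D)
    (hdeg : ∀ n, ∀ v : {A : Set (X n) // A ∈ P n},
      {w | (approxGraph (ν n) (S n) (P n)).Adj v w}.ncard ≤ D)
    (hcard : Filter.Tendsto (fun n => (P n).card) Filter.atTop Filter.atTop)
    (ρminus ρplus : ℝ → ℝ)
    (hmonoMinus : MonotoneOn ρminus (Set.Ici 0)) (hmonoPlus : MonotoneOn ρplus (Set.Ici 0))
    (hnnMinus : ∀ x ≥ (0:ℝ), 0 ≤ ρminus x) (hnnPlus : ∀ x ≥ (0:ℝ), 0 ≤ ρplus x)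
    (hunbMinus : ∀ c : ℝ, ∃ x ≥ (0:ℝ), c ≤ ρminus x)
    (hunbPlus : ∀ c : ℝ, ∃ x ≥ (0:ℝ), c ≤ ρplus x) :
    ¬ ∀ n, ∃ fhat : {A : Set (X n) // A ∈ P n} → E,
        ∀ A B : {A : Set (X n) // A ∈ P n},
          ρminus ((approxGraph (ν n) (S n) (P n)).dist A B : ℝ) ≤ ‖fhat A - fhat B‖ ∧
          ‖fhat A - fhat B‖ ≤ ρplus ((approxGraph (ν n) (S n) (P n)).dist A B : ℝ) :=
  statement4_general Γ X ν S ε hε hgap P hPmeas hPdisj hPcover Q hQ hconn D hdeg hcard ρminus ρplus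
    hmonoMinus hnnPlus hunbMinus
end

section
/- Assume M is compact. Let t > 0, r > 0 and x₀ ∈ M be such that d(x₀, γ·x₀) > 6r/t for every γ ∈ Γ with γ ≠ e and |γ| ≤ 6r. Then the map Φ(γ,z) = γ·z is a bijection from the set P_r = {(γ,z) ∈ Γ×M : |γ| + t·d(z,x₀) < r} onto the open ball {w ∈ M : δ_t(w,x₀) < r}, and for all (γ,z), (γ',z') ∈ P_r one has δ_t(γ·z, γ'·z') = |γ'γ⁻¹| + t·d(z,z'). In particular, the open ball of radius r about x₀ in (M, δ_t) is isometric to the open ball of radius r about (e,x₀) in Γ×M equipped with the ℓ¹-type metric ((γ,z),(γ',z')) ↦ |γ'γ⁻¹| + t·d(z,z'). -/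
/-- The word length of `γ ∈ Γ` with respect to a generating set `S`: the least length of a word
in the elements of `S` whose product is `γ` (so the identity has word length `0`). -/
noncomputable def wordLength {Γ : Type*} [Group Γ] (S : Finset Γ) (γ : Γ) : ℕ :=
  sInf {n : ℕ | ∃ l : List Γ, (∀ a ∈ l, a ∈ S) ∧ l.length = n ∧ l.prod = γ}

/-- The warped distance at level `t`:
`δ_t(x, y) = inf_{γ ∈ Γ} ( t · d(x, γ • y) + |γ| )`. -/
noncomputable def warpDist {Γ M : Type*} [Group Γ] [MetricSpace M] [MulAction Γ M]
    (S : Finset Γ) (t : ℝ) (x y : M) : ℝ :=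
  ⨅ γ : Γ, (t * dist x (γ • y) + (wordLength S γ : ℝ))

section Aux

variable {Γ : Type*} [Group Γ] {S : Finset Γ}

lemma exists_word (hSsym : ∀ s ∈ S, s⁻¹ ∈ S) (hSgen : Subgroup.closure (S : Set Γ) = ⊤)
    (γ : Γ) : ∃ l : List Γ, (∀ a ∈ l, a ∈ S) ∧ l.prod = γ := by
  have hγ : γ ∈ Subgroup.closure (S : Set Γ) := hSgen ▸ Subgroup.mem_top γ
  induction hγ using Subgroup.closure_induction with
  | mem s hs => exact ⟨[s], by simpa using hs, by simp⟩
  | one => exact ⟨[], by simp, by simp⟩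
  | mul x y _ _ ihx ihy =>
      obtain ⟨l1, h1, h1p⟩ := ihx
      obtain ⟨l2, h2, h2p⟩ := ihy
      refine ⟨l1 ++ l2, ?_, by simp [h1p, h2p]⟩
      intro a ha; rcases List.mem_append.1 ha with h | h
      exacts [h1 a h, h2 a h]
  | inv x _ ih =>
      obtain ⟨l, hl, hlp⟩ := ih
      refine ⟨(l.map (·⁻¹)).reverse, ?_, ?_⟩
      · intro a ha
        simp only [List.mem_reverse, List.mem_map] at ha
        obtain ⟨b, hb, rfl⟩ := ha
        exact hSsym b (hl b hb)
      · rw [← hlp]; exact (List.prod_inv_reverse l).symm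

lemma wordLength_le_list (l : List Γ) (hl : ∀ a ∈ l, a ∈ S) :
    wordLength S l.prod ≤ l.length :=
  Nat.sInf_le ⟨l, hl, rfl, rfl⟩

lemma exists_min_word (hSsym : ∀ s ∈ S, s⁻¹ ∈ S) (hSgen : Subgroup.closure (S : Set Γ) = ⊤)
    (γ : Γ) : ∃ l : List Γ, (∀ a ∈ l, a ∈ S) ∧ l.length = wordLength S γ ∧ l.prod = γ := by
  have hne : {n : ℕ | ∃ l : List Γ, (∀ a ∈ l, a ∈ S) ∧ l.length = n ∧ l.prod = γ}.Nonempty := by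
    obtain ⟨l, hl, hp⟩ := exists_word hSsym hSgen γ
    exact ⟨l.length, l, hl, rfl, hp⟩
  exact Nat.sInf_mem hne

lemma wordLength_one : wordLength S (1 : Γ) = 0 := by
  have h := wordLength_le_list (S := S) ([] : List Γ) (by simp)
  simpa using h

lemma eq_one_of_wordLength_eq_zero (hSsym : ∀ s ∈ S, s⁻¹ ∈ S)
    (hSgen : Subgroup.closure (S : Set Γ) = ⊤) {γ : Γ} (h : wordLength S γ = 0) : γ = 1 := by
  obtain ⟨l, _, hlen, hp⟩ := exists_min_word hSsym hSgen γ
  rw [h] at hlen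
  rw [List.length_eq_zero_iff.mp hlen] at hp
  simpa using hp.symm

lemma wordLength_mul_le (hSsym : ∀ s ∈ S, s⁻¹ ∈ S) (hSgen : Subgroup.closure (S : Set Γ) = ⊤)
    (γ γ' : Γ) : wordLength S (γ * γ') ≤ wordLength S γ + wordLength S γ' := by
  obtain ⟨l1, h1, hl1, hp1⟩ := exists_min_word hSsym hSgen γ
  obtain ⟨l2, h2, hl2, hp2⟩ := exists_min_word hSsym hSgen γ'
  have := wordLength_le_list (l1 ++ l2) (by
    intro a ha; rcases List.mem_append.1 ha with h | h
    exacts [h1 a h, h2 a h])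
  simpa [hp1, hp2, hl1, hl2] using this

lemma wordLength_inv (hSsym : ∀ s ∈ S, s⁻¹ ∈ S) (hSgen : Subgroup.closure (S : Set Γ) = ⊤)
    (γ : Γ) : wordLength S γ⁻¹ = wordLength S γ := by
  have key : ∀ δ : Γ, wordLength S δ⁻¹ ≤ wordLength S δ := by
    intro δ
    obtain ⟨l, hl, hlen, hp⟩ := exists_min_word hSsym hSgen δ
    have hmem : ∀ a ∈ (l.map (·⁻¹)).reverse, a ∈ S := by
      intro a ha
      simp only [List.mem_reverse, List.mem_map] at ha
      obtain ⟨b, hb, rfl⟩ := ha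
      exact hSsym b (hl b hb)
    have h1 := wordLength_le_list _ hmem
    have h2 : ((l.map (·⁻¹)).reverse).prod = δ⁻¹ := by
      rw [← hp]; exact (List.prod_inv_reverse l).symm
    rw [h2] at h1
    simpa [hlen] using h1
  refine le_antisymm (key γ) ?_
  have := key γ⁻¹
  simpa using this

lemma warpDist_le {M : Type*} [MetricSpace M] [MulAction Γ M] (S : Finset Γ)
    {t : ℝ} (ht : 0 ≤ t) (x y : M) (γ : Γ) :
    warpDist S t x y ≤ t * dist x (γ • y) + (wordLength S γ : ℝ) := by
  apply ciInf_le _ γ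
  refine ⟨0, ?_⟩
  rintro _ ⟨β, rfl⟩
  exact add_nonneg (mul_nonneg ht dist_nonneg) (Nat.cast_nonneg _)

end Aux

/-- Assume `M` compact and `d(x₀, γ•x₀) > 6r/t` for every `γ ≠ e` with `|γ| ≤ 6r`.  Then
`Φ(γ,z) = γ•z` is a bijection from `P_r = {(γ,z) : |γ| + t·d(z,x₀) < r}` onto the open ball
`{w : δ_t(w,x₀) < r}`, and on `P_r` one has
`δ_t(γ•z, γ'•z') = |γ'γ⁻¹| + t·d(z,z')`, i.e. the ball of radius `r` about `x₀` in `(M, δ_t)` is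
isometric to the ball of radius `r` about `(e,x₀)` in `Γ × M` with the `ℓ¹`-type metric. -/
theorem statement8
    {Γ M : Type*} [Group Γ] [MetricSpace M] [CompactSpace M] [MulAction Γ M]
    (S : Finset Γ)
    (hSsym : ∀ s ∈ S, s⁻¹ ∈ S)
    (hSgen : Subgroup.closure (S : Set Γ) = ⊤)
    (hiso : ∀ (γ : Γ) (x y : M), dist (γ • x) (γ • y) = dist x y)
    (t r : ℝ) (ht : 0 < t) (hr : 0 < r) (x₀ : M)
    (hfree : ∀ γ : Γ, γ ≠ 1 → (wordLength S γ : ℝ) ≤ 6 * r →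
      6 * r / t < dist x₀ (γ • x₀)) :
    Set.BijOn (fun p : Γ × M => p.1 • p.2)
      {p : Γ × M | (wordLength S p.1 : ℝ) + t * dist p.2 x₀ < r}
      {w : M | warpDist S t w x₀ < r} ∧
    ∀ p q : Γ × M,
      (wordLength S p.1 : ℝ) + t * dist p.2 x₀ < r →
      (wordLength S q.1 : ℝ) + t * dist q.2 x₀ < r →
      warpDist S t (p.1 • p.2) (q.1 • q.2)
        = (wordLength S (q.1 * p.1⁻¹) : ℝ) + t * dist p.2 q.2 := by
  have wl_mul : ∀ a b : Γ, (wordLength S (a * b) : ℝ) ≤ wordLength S a + wordLength S b := by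
    intro a b; exact_mod_cast wordLength_mul_le hSsym hSgen a b
  have wl_inv : ∀ a : Γ, (wordLength S a⁻¹ : ℝ) = wordLength S a := by
    intro a; exact_mod_cast wordLength_inv hSsym hSgen a
  -- the key distance formula
  have key : ∀ p q : Γ × M,
      (wordLength S p.1 : ℝ) + t * dist p.2 x₀ < r →
      (wordLength S q.1 : ℝ) + t * dist q.2 x₀ < r →
      warpDist S t (p.1 • p.2) (q.1 • q.2)
        = (wordLength S (q.1 * p.1⁻¹) : ℝ) + t * dist p.2 q.2 := by
    rintro ⟨γ, z⟩ ⟨γ', z'⟩ hp hq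
    simp only at hp hq ⊢
    have hγr : (wordLength S γ : ℝ) < r :=
      lt_of_le_of_lt (le_add_of_nonneg_right (mul_nonneg ht.le dist_nonneg)) hp
    have hzr : t * dist z x₀ < r :=
      lt_of_le_of_lt (le_add_of_nonneg_left (Nat.cast_nonneg _)) hp
    have hγ'r : (wordLength S γ' : ℝ) < r :=
      lt_of_le_of_lt (le_add_of_nonneg_right (mul_nonneg ht.le dist_nonneg)) hq
    have hz'r : t * dist z' x₀ < r :=
      lt_of_le_of_lt (le_add_of_nonneg_left (Nat.cast_nonneg _)) hq
    have hwl_eq : (wordLength S (γ * γ'⁻¹) : ℝ) = wordLength S (γ' * γ⁻¹) := by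
      rw [← wl_inv (γ * γ'⁻¹)]
      congr 1
      simp [mul_inv_rev]
    have hRHS : (wordLength S (γ' * γ⁻¹) : ℝ) + t * dist z z' < 4 * r := by
      have h1 : (wordLength S (γ' * γ⁻¹) : ℝ) ≤ wordLength S γ' + wordLength S γ := by
        have := wl_mul γ' γ⁻¹
        rwa [wl_inv γ] at this
      have h2 : t * dist z z' ≤ t * dist z x₀ + t * dist z' x₀ := by
        rw [← mul_add]
        have : dist z z' ≤ dist z x₀ + dist z' x₀ := by
          have := dist_triangle z x₀ z'
          rwa [dist_comm x₀ z'] at this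
        exact mul_le_mul_of_nonneg_left this ht.le
      linarith
    apply le_antisymm
    · have h := warpDist_le S ht.le (γ • z) (γ' • z') (γ * γ'⁻¹)
      have heq : (γ * γ'⁻¹) • (γ' • z') = γ • z' := by
        rw [smul_smul, inv_mul_cancel_right]
      rw [heq, hiso γ z z', hwl_eq] at h
      linarith
    · apply le_ciInf
      intro β
      have hdist : dist (γ • z) (β • (γ' • z')) = dist z ((γ⁻¹ * β * γ') • z') := by
        have : β • (γ' • z') = γ • ((γ⁻¹ * β * γ') • z') := by
          rw [smul_smul, smul_smul]
          congr 1
          group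
        rw [this, hiso γ z _]
      set α := γ⁻¹ * β * γ' with hα
      by_cases hone : α = 1
      · have hβ : β = γ * γ'⁻¹ := by
          have : γ * α * γ'⁻¹ = β := by rw [hα]; group
          rw [← this, hone]
          group
        rw [hdist, hone, one_smul, hβ, hwl_eq]
        linarith
      · have hterm : 4 * r < t * dist (γ • z) (β • (γ' • z')) + (wordLength S β : ℝ) := by
          rw [hdist]
          by_cases hlen : (wordLength S α : ℝ) ≤ 6 * r
          · have hx := hfree α hone hlen
            have h6 : 6 * r < t * dist x₀ (α • x₀) := by
              rw [div_lt_iff₀ ht] at hx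
              linarith [hx]
            have htri : dist x₀ (α • x₀) ≤ dist x₀ z + dist z (α • z') + dist (α • z') (α • x₀) :=
              dist_triangle4 x₀ z (α • z') (α • x₀)
            rw [hiso α z' x₀] at htri
            have := mul_le_mul_of_nonneg_left htri ht.le
            have hd1 : t * dist x₀ z = t * dist z x₀ := by rw [dist_comm]
            have hwnn : (0:ℝ) ≤ (wordLength S β : ℝ) := Nat.cast_nonneg _
            nlinarith [this]
          · push_neg at hlen
            have h1 : (wordLength S α : ℝ) ≤
                wordLength S γ + wordLength S β + wordLength S γ' := by
              have ha : (wordLength S (γ⁻¹ * β * γ') : ℝ)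
                  ≤ wordLength S (γ⁻¹ * β) + wordLength S γ' := wl_mul _ _
              have hb : (wordLength S (γ⁻¹ * β) : ℝ)
                  ≤ wordLength S γ⁻¹ + wordLength S β := wl_mul _ _
              rw [wl_inv γ] at hb
              calc (wordLength S α : ℝ) = (wordLength S (γ⁻¹ * β * γ') : ℝ) := by rw [hα]
                _ ≤ wordLength S (γ⁻¹ * β) + wordLength S γ' := ha
                _ ≤ wordLength S γ + wordLength S β + wordLength S γ' := by linarith
            have hdn : (0:ℝ) ≤ t * dist z (α • z') := mul_nonneg ht.le dist_nonneg
            linarith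
        linarith
  refine ⟨⟨?_, ?_, ?_⟩, key⟩
  · -- MapsTo
    intro p hp
    simp only [Set.mem_setOf_eq] at hp ⊢
    have h := warpDist_le S ht.le (p.1 • p.2) x₀ p.1
    rw [hiso p.1 p.2 x₀] at h
    linarith
  · -- InjOn
    intro p hp q hq heq
    simp only [Set.mem_setOf_eq] at hp hq
    simp only at heq
    have hk := key p q hp hq
    have h0 : warpDist S t (p.1 • p.2) (q.1 • q.2) ≤ 0 := by
      have h := warpDist_le S ht.le (p.1 • p.2) (q.1 • q.2) 1
      have hd : dist (p.1 • p.2) ((1 : Γ) • (q.1 • q.2)) = 0 := by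
        rw [one_smul, heq, dist_self]
      rw [hd] at h
      simpa [wordLength_one] using h
    rw [hk] at h0
    have hwnn : (0:ℝ) ≤ (wordLength S (q.1 * p.1⁻¹) : ℝ) := Nat.cast_nonneg _
    have hdnn : (0:ℝ) ≤ t * dist p.2 q.2 := mul_nonneg ht.le dist_nonneg
    have hw0 : (wordLength S (q.1 * p.1⁻¹) : ℝ) = 0 := le_antisymm (by linarith) hwnn
    have hd0 : dist p.2 q.2 = 0 := by
      have : t * dist p.2 q.2 = 0 := le_antisymm (by linarith) hdnn
      exact (mul_eq_zero.mp this).resolve_left (ne_of_gt ht)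
    have h1 : q.1 * p.1⁻¹ = 1 := by
      apply eq_one_of_wordLength_eq_zero hSsym hSgen
      exact_mod_cast hw0
    have hγeq : q.1 = p.1 := by
      rw [mul_inv_eq_one] at h1; exact h1
    have hzeq : p.2 = q.2 := dist_eq_zero.mp hd0
    exact Prod.ext (hγeq.symm) hzeq
  · -- SurjOn
    intro w hw
    simp only [Set.mem_setOf_eq] at hw
    rw [warpDist] at hw
    obtain ⟨γ, hγ⟩ := exists_lt_of_ciInf_lt hw
    refine ⟨(γ, γ⁻¹ • w), ?_, ?_⟩
    · simp only [Set.mem_setOf_eq]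
      have hdeq : dist (γ⁻¹ • w) x₀ = dist w (γ • x₀) := by
        have := hiso γ (γ⁻¹ • w) x₀
        rw [smul_inv_smul] at this
        exact this.symm
      rw [hdeq]
      linarith
    · simp [smul_inv_smul]
end

section
/- Let (G_n)_{n∈ℕ} be a sequence of finite connected graphs whose maximum degrees are bounded by a constant D and whose vertex sets V(G_n) satisfy |V(G_n)| → ∞. Then there exists a family 𝒜 of infinite subsets of ℕ, of cardinality the continuum, such that for all distinct I, J ∈ 𝒜 the subsequences (G_n)_{n∈I} and (G_n)_{n∈J} are not uniformly coarsely equivalent; that is, there do not exist nondecreasing unbounded functions ρ₋, ρ₊ : [0,∞) → [0,∞), a constant C > 0, and for each k ∈ ℕ a map f_k : V(G_{I(k)}) → V(G_{J(k)}) which is a coarse embedding with control functions ρ₋, ρ₊ and whose image is C-dense in V(G_{J(k)}), where I(k) and J(k) denote the k-th smallest elements of I and J respectively. -/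
lemma auxWalkPenult {V : Type*} {G : SimpleGraph V} {z x : V} (q : G.Walk z x)
    (hq : q.length ≠ 0) : ∃ (u : V) (q' : G.Walk u x), G.Adj z u ∧ q'.length + 1 = q.length := by
  cases q with
  | nil => simp at hq
  | cons h q' => exact ⟨_, q', h, rfl⟩

lemma auxBall {V : Type*} [Fintype V] (G : SimpleGraph V) (hc : G.Connected) (D : ℕ)
    (hdeg : ∀ v : V, {w | G.Adj v w}.ncard ≤ D) (x : V) (r : ℕ) :
    (Finset.univ.filter (fun y => G.dist x y ≤ r)).card ≤ (D + 1) ^ r := by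
  classical
  have hdeg' : ∀ v : V, (insert v (Finset.univ.filter (fun w => G.Adj v w))).card ≤ D + 1 := by
    intro v
    refine le_trans (Finset.card_insert_le _ _) ?_
    have h1 : ((Finset.univ.filter (fun w => G.Adj v w) : Finset V) : Set V).ncard ≤ D := by
      rw [show ((Finset.univ.filter (fun w => G.Adj v w) : Finset V) : Set V)
            = {w | G.Adj v w} by ext w; simp]
      exact hdeg v
    rw [Set.ncard_coe_finset] at h1
    omega
  induction r with
  | zero =>
    have h : (Finset.univ.filter (fun y => G.dist x y ≤ 0)) ⊆ {x} := by
      intro y hy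
      simp only [Finset.mem_filter, Finset.mem_univ, true_and, Nat.le_zero] at hy
      simp [← hc.dist_eq_zero_iff.mp hy]
    simpa using Finset.card_le_card h
  | succ r ih =>
    have hsub : (Finset.univ.filter (fun y => G.dist x y ≤ r + 1)) ⊆
        (Finset.univ.filter (fun y => G.dist x y ≤ r)).biUnion
          (fun v => insert v (Finset.univ.filter (fun w => G.Adj v w))) := by
      intro z hz
      simp only [Finset.mem_filter, Finset.mem_univ, true_and] at hz
      rw [Finset.mem_biUnion]
      by_cases h : G.dist x z ≤ r
      · exact ⟨z, by simp [h], Finset.mem_insert_self _ _⟩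
      · have hd : G.dist x z = r + 1 := le_antisymm hz (by omega)
        have hne : G.dist x z ≠ 0 := by omega
        obtain ⟨p, hp⟩ := G.exists_walk_of_dist_ne_zero hne
        have hlen : p.reverse.length ≠ 0 := by
          rw [SimpleGraph.Walk.length_reverse, hp]; omega
        obtain ⟨u, q', hadj, hq'⟩ := auxWalkPenult p.reverse hlen
        refine ⟨u, ?_, ?_⟩
        · have h2 : G.dist x u ≤ q'.reverse.length := SimpleGraph.dist_le _
          rw [SimpleGraph.Walk.length_reverse] at h2
          rw [SimpleGraph.Walk.length_reverse, hp] at hq'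
          simp only [Finset.mem_filter, Finset.mem_univ, true_and]
          omega
        · exact Finset.mem_insert.mpr (Or.inr (by simp [hadj.symm]))
    calc (Finset.univ.filter (fun y => G.dist x y ≤ r + 1)).card
        ≤ _ := Finset.card_le_card hsub
      _ ≤ (Finset.univ.filter (fun y => G.dist x y ≤ r)).card * (D + 1) :=
          Finset.card_biUnion_le_card_mul _ _ _ (fun v _ => hdeg' v)
      _ ≤ (D + 1) ^ r * (D + 1) := Nat.mul_le_mul_right _ ih
      _ = (D + 1) ^ (r + 1) := (pow_succ _ _).symm

lemma auxDense {A B : Type*} [Fintype A] [Fintype B] (GB : SimpleGraph B)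
    (hcB : GB.Connected) (D : ℕ) (hdegB : ∀ v : B, {w | GB.Adj v w}.ncard ≤ D)
    (f : A → B) (c : ℕ) (hf : ∀ y : B, ∃ x : A, GB.dist (f x) y ≤ c) :
    Fintype.card B ≤ Fintype.card A * (D + 1) ^ c := by
  classical
  have hsub : (Finset.univ : Finset B) ⊆ Finset.univ.biUnion
      (fun x : A => Finset.univ.filter (fun y => GB.dist (f x) y ≤ c)) := by
    intro y _
    obtain ⟨x, hx⟩ := hf y
    exact Finset.mem_biUnion.mpr ⟨x, Finset.mem_univ _, by simp [hx]⟩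
  calc Fintype.card B = (Finset.univ : Finset B).card := rfl
    _ ≤ _ := Finset.card_le_card hsub
    _ ≤ (Finset.univ : Finset A).card * (D + 1) ^ c :=
        Finset.card_biUnion_le_card_mul _ _ _ (fun x _ => auxBall GB hcB D hdegB (f x) c)
    _ = Fintype.card A * (D + 1) ^ c := rfl

lemma auxFiber {A B : Type*} [Fintype A] [Fintype B] (GA : SimpleGraph A)
    (hcA : GA.Connected) (D : ℕ) (hdegA : ∀ v : A, {w | GA.Adj v w}.ncard ≤ D)
    (f : A → B) (r : ℕ) (hf : ∀ x y : A, f x = f y → GA.dist x y ≤ r) :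
    Fintype.card A ≤ (D + 1) ^ r * Fintype.card B := by
  classical
  have h := Finset.card_le_mul_card_image (f := f) Finset.univ ((D + 1) ^ r) ?_
  · calc Fintype.card A = (Finset.univ : Finset A).card := rfl
      _ ≤ (D + 1) ^ r * (Finset.univ.image f).card := h
      _ ≤ (D + 1) ^ r * Fintype.card B :=
          Nat.mul_le_mul_left _ (Finset.card_le_univ _)
  · intro b hb
    obtain ⟨x₀, -, hx₀⟩ := Finset.mem_image.mp hb
    have hsub : (Finset.univ.filter (fun a => f a = b)) ⊆
        Finset.univ.filter (fun y => GA.dist x₀ y ≤ r) := by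
      intro a ha
      simp only [Finset.mem_filter, Finset.mem_univ, true_and] at ha ⊢
      exact hf x₀ a (hx₀.trans ha.symm)
    exact le_trans (Finset.card_le_card hsub) (auxBall GA hcA D hdegA x₀ r)

noncomputable def prefCode (x : ℕ → Bool) (n : ℕ) : ℕ :=
  Encodable.encode (List.ofFn fun i : Fin n => x i)

lemma prefCode_eq {x y : ℕ → Bool} {m n : ℕ} (h : prefCode x m = prefCode y n) :
    m = n ∧ ∀ i < m, x i = y i := by
  have hl : (List.ofFn fun i : Fin m => x i) = (List.ofFn fun i : Fin n => y i) :=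
    Encodable.encode_injective h
  have hlen : m = n := by
    have := congrArg List.length hl
    simpa using this
  subst hlen
  refine ⟨rfl, fun i hi => ?_⟩
  have := List.ofFn_injective hl
  exact congrFun this ⟨i, hi⟩

lemma prefCode_injective (x : ℕ → Bool) : Function.Injective (prefCode x) :=
  fun m n h => (prefCode_eq h).1

lemma prefRange_infinite (x : ℕ → Bool) : (Set.range (prefCode x)).Infinite :=
  Set.infinite_range_of_injective (prefCode_injective x)

lemma prefRange_inter_finite {x y : ℕ → Bool} (hxy : x ≠ y) :
    (Set.range (prefCode x) ∩ Set.range (prefCode y)).Finite := by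
  obtain ⟨n₀, hn₀⟩ := Function.ne_iff.mp hxy
  have hsub : Set.range (prefCode x) ∩ Set.range (prefCode y) ⊆
      prefCode x '' Set.Iic n₀ := by
    rintro z ⟨⟨m, rfl⟩, ⟨n, hn⟩⟩
    obtain ⟨hmn, hpre⟩ := prefCode_eq hn.symm
    refine ⟨m, ?_, rfl⟩
    by_contra hm
    exact hn₀ (hpre n₀ (by simpa using hm))
  exact ((Set.finite_Iic n₀).image _).subset hsub

lemma prefRange_injective : Function.Injective (fun x : ℕ → Bool => Set.range (prefCode x)) := by
  intro x y h
  by_contra hxy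
  have hfin := prefRange_inter_finite hxy
  rw [show Set.range (prefCode x) = Set.range (prefCode y) from h, Set.inter_self] at hfin
  exact prefRange_infinite y hfin

lemma mk_funs : Cardinal.mk (ℕ → Bool) = Cardinal.continuum := by
  rw [← Cardinal.two_power_aleph0]
  simp [Cardinal.mk_arrow]

/-- Let `(G n)` be a sequence of finite connected graphs of uniformly bounded degree with
`|V (G n)| → ∞`.  Then there is a family `𝒜` of infinite subsets of `ℕ` of cardinality the
continuum such that for distinct `I, J ∈ 𝒜` the subsequences `(G n)_{n ∈ I}` and `(G n)_{n ∈ J}`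
are not uniformly coarsely equivalent: there are no nondecreasing unbounded control functions
`ρ₋, ρ₊`, constant `C > 0`, and maps `f_k : V (G (I(k))) → V (G (J(k)))` that are coarse
embeddings with controls `ρ₋, ρ₊` and `C`-dense image, where `I(k)` denotes the `k`-th smallest
element of `I`. -/
theorem statement10
    (V : ℕ → Type*) [∀ n, Fintype (V n)]
    (G : ∀ n, SimpleGraph (V n))
    (hconn : ∀ n, (G n).Connected)
    (D : ℕ) (hdeg : ∀ n, ∀ v : V n, {w | (G n).Adj v w}.ncard ≤ D)
    (hcard : Filter.Tendsto (fun n => Fintype.card (V n)) Filter.atTop Filter.atTop) :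
    ∃ 𝒜 : Set (Set ℕ),
      Cardinal.mk 𝒜 = Cardinal.continuum ∧
      (∀ I ∈ 𝒜, I.Infinite) ∧
      (∀ I ∈ 𝒜, ∀ J ∈ 𝒜, I ≠ J →
        ¬ ∃ (ρminus ρplus : ℝ → ℝ) (C : ℝ),
            MonotoneOn ρminus (Set.Ici 0) ∧ MonotoneOn ρplus (Set.Ici 0) ∧
            (∀ x ≥ (0:ℝ), 0 ≤ ρminus x) ∧ (∀ x ≥ (0:ℝ), 0 ≤ ρplus x) ∧
            (∀ c : ℝ, ∃ x ≥ (0:ℝ), c ≤ ρminus x) ∧ (∀ c : ℝ, ∃ x ≥ (0:ℝ), c ≤ ρplus x) ∧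
            0 < C ∧
            ∀ k : ℕ, ∃ f : V (Nat.nth (· ∈ I) k) → V (Nat.nth (· ∈ J) k),
              (∀ x y : V (Nat.nth (· ∈ I) k),
                ρminus ((G (Nat.nth (· ∈ I) k)).dist x y : ℝ)
                    ≤ ((G (Nat.nth (· ∈ J) k)).dist (f x) (f y) : ℝ) ∧
                ((G (Nat.nth (· ∈ J) k)).dist (f x) (f y) : ℝ)
                    ≤ ρplus ((G (Nat.nth (· ∈ I) k)).dist x y : ℝ)) ∧
              ∀ y' : V (Nat.nth (· ∈ J) k), ∃ x : V (Nat.nth (· ∈ I) k),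
                ((G (Nat.nth (· ∈ J) k)).dist (f x) y' : ℝ) ≤ C) := by
  classical
  -- positivity of cardinalities
  have hVpos : ∀ n, 0 < Fintype.card (V n) := fun n => @Fintype.card_pos _ _ (hconn n).nonempty
  -- rapidly growing index sequence
  have hstep : ∀ N : ℕ, ∃ M : ℕ, N < M ∧ (N + 1) * Fintype.card (V N) ≤ Fintype.card (V M) := by
    intro N
    obtain ⟨a, ha⟩ := (Filter.eventually_atTop).mp
      (hcard.eventually_ge_atTop ((N + 1) * Fintype.card (V N)))
    exact ⟨max a (N + 1), lt_of_lt_of_le (Nat.lt_succ_self N) (le_max_right _ _),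
      ha _ (le_max_left _ _)⟩
  choose g hg1 hg2 using hstep
  set m : ℕ → ℕ := fun j => Nat.rec 0 (fun _ mj => g mj) j with hm
  have hm_succ : ∀ j, m (j + 1) = g (m j) := fun j => rfl
  have hm_lt : ∀ j, m j < m (j + 1) := fun j => by rw [hm_succ]; exact hg1 (m j)
  have hm_mono : StrictMono m := strictMono_nat_of_lt_succ hm_lt
  have hm_card_mono : ∀ j, Fintype.card (V (m j)) ≤ Fintype.card (V (m (j + 1))) := by
    intro j
    rw [hm_succ]
    refine le_trans ?_ (hg2 (m j))
    nlinarith [hVpos (m j)]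
  have hratio : ∀ i j, i < j →
      (m i + 1) * Fintype.card (V (m i)) ≤ Fintype.card (V (m j)) := by
    intro i j hij
    induction j with
    | zero => omega
    | succ j ihj =>
      rcases Nat.lt_succ_iff_lt_or_eq.mp hij with h | h
      · exact le_trans (ihj h) (hm_card_mono j)
      · subst h; rw [hm_succ]; exact hg2 (m i)
  have hQ : ∀ a b : ℕ, a ∈ Set.range m → b ∈ Set.range m → a < b →
      (a + 1) * Fintype.card (V a) ≤ Fintype.card (V b) := by
    rintro _ _ ⟨i, rfl⟩ ⟨j, rfl⟩ hab
    exact hratio i j (hm_mono.lt_iff_lt.mp hab)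
  -- the family
  set F : (ℕ → Bool) → Set ℕ := fun x => m '' Set.range (prefCode x) with hF
  have hFinj : Function.Injective F := by
    intro x y h
    exact prefRange_injective ((Set.image_injective.mpr hm_mono.injective) h)
  refine ⟨Set.range F, ?_, ?_, ?_⟩
  · rw [Cardinal.mk_range_eq F hFinj, mk_funs]
  · rintro _ ⟨x, rfl⟩
    exact ((prefRange_infinite x).image hm_mono.injective.injOn)
  · rintro _ ⟨x, rfl⟩ _ ⟨y, rfl⟩ hIJ
    rintro ⟨ρm, ρp, C, hρm_mono, -, -, -, hρm_unbdd, -, hC, hmaps⟩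
    have hxy : x ≠ y := fun h => hIJ (congrArg F h)
    set I : Set ℕ := F x
    set J : Set ℕ := F y
    have hpI : {n | n ∈ I}.Infinite := (prefRange_infinite x).image hm_mono.injective.injOn
    have hpJ : {n | n ∈ J}.Infinite := (prefRange_infinite y).image hm_mono.injective.injOn
    -- control radius
    obtain ⟨R, hR0, hR1⟩ := hρm_unbdd 1
    set r : ℕ := ⌈R⌉₊ with hr
    set c : ℕ := ⌈C⌉₊ with hcdef
    set K : ℕ := (D + 1) ^ (max r c) with hK
    have hKr : (D + 1) ^ r ≤ K := Nat.pow_le_pow_right (Nat.succ_pos D) (le_max_left _ _)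
    have hKc : (D + 1) ^ c ≤ K := Nat.pow_le_pow_right (Nat.succ_pos D) (le_max_right _ _)
    -- finite intersection, bound
    have hIJfin : (I ∩ J).Finite := by
      have heq : I ∩ J = m '' (Set.range (prefCode x) ∩ Set.range (prefCode y)) :=
        (Set.image_inter hm_mono.injective).symm
      rw [heq]
      exact ((prefRange_inter_finite hxy).image m)
    obtain ⟨Bd, hBd⟩ := hIJfin.bddAbove
    set k : ℕ := max (K + 1) (Bd + 1) with hk
    set a : ℕ := Nat.nth (· ∈ I) k with hadef
    set b : ℕ := Nat.nth (· ∈ J) k with hbdef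
    have hk_le_a : k ≤ a := (Nat.nth_strictMono hpI).le_apply
    have hk_le_b : k ≤ b := (Nat.nth_strictMono hpJ).le_apply
    have haI : a ∈ I := Nat.nth_mem_of_infinite hpI k
    have hbJ : b ∈ J := Nat.nth_mem_of_infinite hpJ k
    have hab : a ≠ b := by
      intro h
      have hmem : a ∈ I ∩ J := ⟨haI, h ▸ hbJ⟩
      have := hBd hmem
      omega
    have haR : a ∈ Set.range m := Set.image_subset_range m _ haI
    have hbR : b ∈ Set.range m := Set.image_subset_range m _ hbJ
    obtain ⟨f, hfc, hfd⟩ := hmaps k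
    -- dense bound : card V b ≤ card V a * K
    have hdense : Fintype.card (V b) ≤ Fintype.card (V a) * K := by
      refine le_trans (auxDense (G b) (hconn b) D (hdeg b) f c ?_)
        (Nat.mul_le_mul_left _ hKc)
      intro y'
      obtain ⟨x', hx'⟩ := hfd y'
      refine ⟨x', ?_⟩
      exact_mod_cast le_trans hx' (Nat.le_ceil C)
    -- fiber bound : card V a ≤ K * card V b
    have hfiber : Fintype.card (V a) ≤ K * Fintype.card (V b) := by
      refine le_trans (auxFiber (G a) (hconn a) D (hdeg a) f r ?_)
        (Nat.mul_le_mul_right _ hKr)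
      intro x' y' hxy'
      by_contra h
      push_neg at h
      have h1 : R ≤ ((G a).dist x' y' : ℝ) := by
        have : (r : ℝ) ≤ ((G a).dist x' y' : ℝ) := by exact_mod_cast h.le
        exact le_trans (Nat.le_ceil R) this
      have hdnn : (0:ℝ) ≤ ((G a).dist x' y' : ℝ) := by positivity
      have h2 : ρm R ≤ ρm ((G a).dist x' y' : ℝ) :=
        hρm_mono (Set.mem_Ici.mpr hR0) (Set.mem_Ici.mpr hdnn) h1
      have h3 := (hfc x' y').1
      rw [hxy'] at h3
      rw [SimpleGraph.dist_self] at h3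
      push_cast at h3
      linarith
    -- contradiction via the growth of cardinalities
    have hKk : K < k := by omega
    rcases hab.lt_or_gt with hlt | hlt
    · have hgrow := hQ a b haR hbR hlt
      have h1 : Fintype.card (V a) * K < (a + 1) * Fintype.card (V a) := by
        have := hVpos a
        calc Fintype.card (V a) * K < Fintype.card (V a) * (a + 1) :=
          Nat.mul_lt_mul_of_pos_left (by omega) this
        _ = (a + 1) * Fintype.card (V a) := Nat.mul_comm _ _
      omega
    · have hgrow := hQ b a hbR haR hlt
      have h1 : K * Fintype.card (V b) < (b + 1) * Fintype.card (V b) := by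
        have := hVpos b
        exact Nat.mul_lt_mul_of_pos_right (by omega) this
      omega
end
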